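/- arXiv:1801.02436 — 4 statements merged into one kernel-verified Lean document; each statement's English description precedes it below -/
import Mathlib

section
/- For a sequence p_i with p_i ~ c/i^α as i→∞ (c>0, α>1), the sum Σ_{i=1}^∞ (1 - e^{-p_i x}) is asymptotically equivalent to (c x)^{1/α} Γ(1 - 1/α) as x→∞. -/
/-!
For the model sequence `y (i+1)^(-α)` the terms are the values at the integers of
`t ↦ 1 - exp (-(y t^(-α)))`, which is antitone with values in `[0, 1]`; so the series is within `1`
of the integral over `(0, ∞)`. The substitution `u = y t^(-α)` and an integration by parts against
`u^(-1/α)` turn that integral into `y^(1/α) Γ(1 - 1/α)`.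

For general `p`, eventually `(1 - δ)^α c i^(-α) ≤ p i ≤ (1 + δ)^α c i^(-α)`. Since every term lies
in `[0, 1]` and is monotone in `p i`, the series at `x` differs by `O(1)` from a model series with
`y = (1 ∓ δ)^α c x`, i.e. it lies between `(1 ∓ δ) (c x)^(1/α) Γ(1 - 1/α) ∓ O(1)`.
-/

open Filter Real MeasureTheory Set Topology

lemma one_sub_exp_neg_nonneg {u : ℝ} (hu : 0 ≤ u) : 0 ≤ 1 - exp (-u) := by
  simpa using exp_le_one_iff.2 (neg_nonpos.2 hu)

lemma one_sub_exp_neg_le_self (u : ℝ) : 1 - exp (-u) ≤ u := by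
  linarith [one_sub_le_exp_neg u]

lemma one_sub_exp_neg_le_one (u : ℝ) : 1 - exp (-u) ≤ 1 := by
  linarith [exp_pos (-u)]

lemma integrableOn_one_sub_exp_neg_mul_rpow {β : ℝ} (hβ0 : 0 < β) (hβ1 : β < 1) :
    IntegrableOn (fun u : ℝ => (1 - exp (-u)) * u ^ (-β - 1)) (Ioi 0) := by
  have hcont : ContinuousOn (fun u : ℝ => (1 - exp (-u)) * u ^ (-β - 1)) (Ioi 0) :=
    (by fun_prop : Continuous fun u : ℝ => 1 - exp (-u)).continuousOn.mul
      (continuousOn_id.rpow_const fun u hu => Or.inl (ne_of_gt hu))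
  have hnorm : ∀ u ∈ Ioi (0 : ℝ),
      ‖(1 - exp (-u)) * u ^ (-β - 1)‖ = (1 - exp (-u)) * u ^ (-β - 1) := fun u hu =>
    norm_of_nonneg (mul_nonneg (one_sub_exp_neg_nonneg (le_of_lt hu)) (rpow_nonneg (le_of_lt hu) _))
  rw [← Ioc_union_Ioi_eq_Ioi zero_le_one]
  refine IntegrableOn.union ?_ ?_
  · have hint : IntegrableOn (fun u : ℝ => u ^ (-β)) (Ioc 0 1) :=
      (intervalIntegrable_iff_integrableOn_Ioc_of_le zero_le_one).1
        (intervalIntegral.intervalIntegrable_rpow' (r := -β) (by linarith))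
    refine hint.mono' ((hcont.mono Ioc_subset_Ioi_self).aestronglyMeasurable measurableSet_Ioc)
      (ae_restrict_of_forall_mem measurableSet_Ioc fun u hu => ?_)
    rw [hnorm u hu.1]
    calc (1 - exp (-u)) * u ^ (-β - 1) ≤ u * u ^ (-β - 1) := by
          gcongr
          · exact rpow_nonneg hu.1.le _
          · exact one_sub_exp_neg_le_self u
      _ = u ^ (-β) := by rw [mul_comm, ← rpow_add_one hu.1.ne']; ring_nf
  · refine (integrableOn_Ioi_rpow_of_lt (a := -β - 1) (by linarith) one_pos).mono'
      ((hcont.mono (Ioi_subset_Ioi zero_le_one)).aestronglyMeasurable measurableSet_Ioi)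
      (ae_restrict_of_forall_mem measurableSet_Ioi fun u hu => ?_)
    have hu0 : (0 : ℝ) < u := zero_lt_one.trans hu
    rw [hnorm u hu0]
    exact mul_le_of_le_one_left (rpow_nonneg hu0.le _) (one_sub_exp_neg_le_one u)

lemma integral_one_sub_exp_neg_mul_rpow {β : ℝ} (hβ0 : 0 < β) (hβ1 : β < 1) :
    ∫ u in Ioi (0 : ℝ), (1 - exp (-u)) * u ^ (-β - 1) = Gamma (1 - β) / β := by
  have hu : ∀ u ∈ Ioi (0 : ℝ), HasDerivAt (fun u => 1 - exp (-u)) (exp (-u)) u := fun u _ => by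
    simpa using ((hasDerivAt_neg u).exp).const_sub 1
  have hv : ∀ u ∈ Ioi (0 : ℝ), HasDerivAt (fun u => -β⁻¹ * u ^ (-β)) (u ^ (-β - 1)) u :=
    fun u hu => ((hasDerivAt_rpow_const (Or.inl (ne_of_gt hu))).const_mul (-β⁻¹)).congr_deriv
      (by field_simp)
  have hGamma : IntegrableOn (fun u : ℝ => exp (-u) * (-β⁻¹ * u ^ (-β))) (Ioi 0) := by
    have := (GammaIntegral_convergent (s := 1 - β) (by linarith)).const_mul (-β⁻¹)
    refine IntegrableOn.congr_fun this (fun u _ => ?_) measurableSet_Ioi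
    simp only [sub_sub_cancel_left]
    ring
  have hzero : Tendsto (fun u : ℝ => (1 - exp (-u)) * (-β⁻¹ * u ^ (-β))) (𝓝[>] 0) (𝓝 0) := by
    have hlim : Tendsto (fun u : ℝ => β⁻¹ * u ^ (1 - β)) (𝓝[>] 0) (𝓝 (β⁻¹ * 0 ^ (1 - β))) :=
      ((continuousAt_rpow_const 0 (1 - β) (Or.inr (by linarith))).tendsto.mono_left
        nhdsWithin_le_nhds).const_mul _
    rw [zero_rpow (by linarith), mul_zero] at hlim
    refine squeeze_zero_norm' ?_ hlim
    filter_upwards [self_mem_nhdsWithin] with u (hu : 0 < u)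
    rw [norm_mul, norm_of_nonneg (one_sub_exp_neg_nonneg hu.le), norm_mul, norm_neg,
      norm_inv, norm_of_nonneg hβ0.le, norm_of_nonneg (rpow_nonneg hu.le _)]
    calc (1 - exp (-u)) * (β⁻¹ * u ^ (-β)) ≤ u * (β⁻¹ * u ^ (-β)) := by
          gcongr
          exact one_sub_exp_neg_le_self u
      _ = β⁻¹ * u ^ (1 - β) := by
          rw [rpow_sub hu, rpow_one, rpow_neg hu.le]
          field_simp
  have hinfty : Tendsto (fun u : ℝ => (1 - exp (-u)) * (-β⁻¹ * u ^ (-β))) atTop (𝓝 0) := by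
    have h1 : Tendsto (fun u : ℝ => 1 - exp (-u)) atTop (𝓝 (1 - 0)) :=
      tendsto_exp_neg_atTop_nhds_zero.const_sub 1
    have h2 : Tendsto (fun u : ℝ => (-β⁻¹ * u ^ (-β))) atTop (𝓝 (-β⁻¹ * 0)) :=
      (tendsto_rpow_neg_atTop hβ0).const_mul _
    simpa using h1.mul h2
  have hparts := integral_Ioi_mul_deriv_eq_deriv_mul hu hv
    (integrableOn_one_sub_exp_neg_mul_rpow hβ0 hβ1) hGamma hzero hinfty
  rw [hparts, Gamma_eq_integral (by linarith), ← integral_div, sub_zero, zero_sub,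
    ← integral_neg]
  refine setIntegral_congr_fun measurableSet_Ioi fun u _ => ?_
  simp only [sub_sub_cancel_left]
  ring

lemma integral_one_sub_exp_neg_rpow_neg {α : ℝ} (hα : 1 < α) :
    ∫ t in Ioi (0 : ℝ), (1 - exp (-t ^ (-α))) = Gamma (1 - α⁻¹) := by
  have hα0 : 0 < α := by linarith
  rw [show Gamma (1 - α⁻¹) = α⁻¹ * (Gamma (1 - α⁻¹) / α⁻¹) by field_simp,
    ← integral_one_sub_exp_neg_mul_rpow (inv_pos.2 hα0) (inv_lt_one_of_one_lt₀ hα),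
    ← integral_const_mul, ← integral_comp_rpow_Ioi
      (fun u => α⁻¹ * ((1 - exp (-u)) * u ^ (-α⁻¹ - 1))) (neg_ne_zero.2 hα0.ne')]
  refine setIntegral_congr_fun measurableSet_Ioi fun t (ht : 0 < t) => ?_
  have hpow : t ^ (-α - 1) * (t ^ (-α)) ^ (-α⁻¹ - 1) = 1 := by
    rw [← rpow_mul ht.le, ← rpow_add ht]
    field_simp
    simp
  rw [smul_eq_mul, abs_neg, abs_of_pos hα0, mul_mul_mul_comm, mul_inv_cancel₀ hα0.ne', one_mul,
    mul_left_comm, hpow, mul_one]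

lemma integral_one_sub_exp_neg_mul_rpow_neg {α y : ℝ} (hα : 1 < α) (hy : 0 < y) :
    ∫ t in Ioi (0 : ℝ), (1 - exp (-(y * t ^ (-α)))) = y ^ α⁻¹ * Gamma (1 - α⁻¹) := by
  have hα0 : 0 < α := by linarith
  have hscale : ∀ t ∈ Ioi (0 : ℝ), y * t ^ (-α) = (y ^ (-α⁻¹) * t) ^ (-α) := fun t ht => by
    rw [mul_rpow (rpow_nonneg hy.le _) (le_of_lt ht), ← rpow_mul hy.le]
    field_simp
    simp [mul_comm]
  rw [setIntegral_congr_fun measurableSet_Ioi fun t ht => by rw [hscale t ht],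
    integral_comp_mul_left_Ioi (fun s => 1 - exp (-s ^ (-α))) 0 (rpow_pos_of_pos hy _),
    mul_zero, integral_one_sub_exp_neg_rpow_neg hα, smul_eq_mul, ← rpow_neg hy.le, neg_neg]

lemma abs_tsum_nat_add_one_sub_integral_Ioi_le {f : ℝ → ℝ} (hanti : AntitoneOn f (Ici 1))
    (hint : IntegrableOn f (Ioi 0)) (hf0 : ∀ t ∈ Ioi 0, 0 ≤ f t) (hf1 : ∀ t ∈ Ioi 0, f t ≤ 1) :
    Summable (fun n : ℕ => f (n + 1 : ℕ)) ∧ |∑' n : ℕ, f (n + 1 : ℕ) - ∫ t in Ioi 0, f t| ≤ 1 := by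
  have hanti' : AntitoneOn f (Ici ((1 : ℕ) : ℝ)) := by simpa using hanti
  have hint' : IntegrableOn f (Ioi ((1 : ℕ) : ℝ)) := hint.mono_set (Ioi_subset_Ioi (by simp))
  have hf0' : ∀ t ∈ Ioi ((1 : ℕ) : ℝ), 0 ≤ f t := fun t (ht : (1 : ℕ) < t) =>
    hf0 t ((Nat.cast_pos.2 one_pos).trans ht : (0 : ℝ) < t)
  have hsum : Summable fun n : ℕ => f (n + 1 : ℕ) :=
    (summable_nat_add_iff 1).2 (hanti'.summable_of_integrableOn_Ioi hint' hf0')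
  have hlower : ∫ t in Ioi ((1 : ℕ) : ℝ), f t ≤ ∑' n : ℕ, f (n + 1 : ℕ) :=
    hanti'.integral_le_tsum_comp_add 1 ((summable_nat_add_iff 1).1 hsum) hf0'
  have hupper : ∑' n : ℕ, f (n + 1 + 1 : ℕ) ≤ ∫ t in Ioi ((1 : ℕ) : ℝ), f t :=
    hanti'.tsum_comp_add_le_integral 1 hint' hf0'
  have hsplit : (∫ t in Ioc 0 1, f t) + ∫ t in Ioi ((1 : ℕ) : ℝ), f t = ∫ t in Ioi 0, f t := by
    rw [Nat.cast_one, ← setIntegral_union Ioc_disjoint_Ioi_same measurableSet_Ioi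
      (hint.mono_set Ioc_subset_Ioi_self) (hint.mono_set (Ioi_subset_Ioi zero_le_one)),
      Ioc_union_Ioi_eq_Ioi zero_le_one]
  have hhead0 : 0 ≤ ∫ t in Ioc 0 1, f t :=
    setIntegral_nonneg measurableSet_Ioc fun t ht => hf0 t ht.1
  have hhead1 : ∫ t in Ioc 0 1, f t ≤ 1 := by
    have := norm_setIntegral_le_of_norm_le_const (s := Ioc (0 : ℝ) 1) (μ := volume) (f := f)
      measure_Ioc_lt_top fun t ht => (norm_of_nonneg (hf0 t ht.1)).trans_le (hf1 t ht.1)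
    rw [volume_real_Ioc_of_le zero_le_one, sub_zero, mul_one] at this
    exact (le_abs_self _).trans this
  have hfirst : f (0 + 1 : ℕ) ≤ 1 := hf1 _ (by simp)
  refine ⟨hsum, abs_sub_le_iff.2 ⟨?_, by linarith⟩⟩
  rw [hsum.tsum_eq_zero_add]
  linarith

lemma abs_tsum_one_sub_exp_neg_mul_rpow_neg_sub_le {α y : ℝ} (hα : 1 < α) (hy : 0 < y) :
    Summable (fun n : ℕ => 1 - exp (-(y * ((n + 1 : ℕ) : ℝ) ^ (-α)))) ∧
      |∑' n : ℕ, (1 - exp (-(y * ((n + 1 : ℕ) : ℝ) ^ (-α)))) - y ^ α⁻¹ * Gamma (1 - α⁻¹)| ≤ 1 := by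
  have hI := integral_one_sub_exp_neg_mul_rpow_neg hα hy
  have hf0 : ∀ t ∈ Ioi (0 : ℝ), 0 ≤ 1 - exp (-(y * t ^ (-α))) := fun t ht =>
    one_sub_exp_neg_nonneg (mul_nonneg hy.le (rpow_nonneg (le_of_lt ht) _))
  have hanti : AntitoneOn (fun t : ℝ => 1 - exp (-(y * t ^ (-α)))) (Ici 1) :=
    fun s (hs : 1 ≤ s) t _ hst => by
      have hpow : t ^ (-α) ≤ s ^ (-α) := rpow_le_rpow_of_nonpos (by linarith) hst (by linarith)
      dsimp only
      gcongr
  have hint : IntegrableOn (fun t : ℝ => 1 - exp (-(y * t ^ (-α)))) (Ioi 0) :=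
    Integrable.of_integral_ne_zero <| by
      rw [hI]
      exact (mul_pos (rpow_pos_of_pos hy _)
        (Gamma_pos_of_pos (sub_pos.2 (inv_lt_one_of_one_lt₀ hα)))).ne'
  rw [← hI]
  exact abs_tsum_nat_add_one_sub_integral_Ioi_le hanti hint hf0 fun t _ => one_sub_exp_neg_le_one _

lemma tsum_le_add_tsum_of_le {a b : ℕ → ℝ} {K : ℕ} (ha : Summable a) (hb : Summable b)
    (ha1 : ∀ i, a i ≤ 1) (hb0 : ∀ i, 0 ≤ b i) (hab : ∀ i, K ≤ i → a i ≤ b i) :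
    ∑' i, a i ≤ K + ∑' i, b i := by
  rw [← ha.sum_add_tsum_nat_add K, ← hb.sum_add_tsum_nat_add K]
  have hhead : ∑ i ∈ Finset.range K, a i ≤ K := by
    simpa using Finset.sum_le_sum fun i (_ : i ∈ Finset.range K) => ha1 i
  have hhead0 : 0 ≤ ∑ i ∈ Finset.range K, b i := Finset.sum_nonneg fun i _ => hb0 i
  have htail : ∑' i, a (i + K) ≤ ∑' i, b (i + K) :=
    ((summable_nat_add_iff K).2 ha).tsum_le_tsum (fun i => hab _ (Nat.le_add_left K i))
      ((summable_nat_add_iff K).2 hb)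
  linarith

section OneSubExpNeg

variable {α y : ℝ} {q : ℕ → ℝ} {K : ℕ}

lemma summable_one_sub_exp_neg_and_tsum_le (hα : 1 < α) (hy : 0 < y) (hq : ∀ i, 0 ≤ q i)
    (hqK : ∀ i, K ≤ i → q i ≤ y * ((i + 1 : ℕ) : ℝ) ^ (-α)) :
    Summable (fun i => 1 - exp (-q i)) ∧
      ∑' i, (1 - exp (-q i)) ≤ y ^ α⁻¹ * Gamma (1 - α⁻¹) + (K + 1) := by
  obtain ⟨hmodel, hclose⟩ := abs_tsum_one_sub_exp_neg_mul_rpow_neg_sub_le hα hy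
  have hle : ∀ i, K ≤ i → 1 - exp (-q i) ≤ 1 - exp (-(y * ((i + 1 : ℕ) : ℝ) ^ (-α))) :=
    fun i hi => by gcongr; exact hqK i hi
  have hsum : Summable (fun i => 1 - exp (-q i)) :=
    hmodel.of_norm_bounded_eventually_nat <| eventually_atTop.2 ⟨K, fun i hi => by
      rw [norm_of_nonneg (one_sub_exp_neg_nonneg (hq i))]
      exact hle i hi⟩
  refine ⟨hsum, ?_⟩
  have := tsum_le_add_tsum_of_le hsum hmodel (fun i => one_sub_exp_neg_le_one _)
    (fun i => one_sub_exp_neg_nonneg (by positivity)) hle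
  linarith [(abs_sub_le_iff.1 hclose).1]

lemma sub_le_tsum_one_sub_exp_neg (hα : 1 < α) (hy : 0 < y) (hq : ∀ i, 0 ≤ q i)
    (hsum : Summable (fun i => 1 - exp (-q i)))
    (hqK : ∀ i, K ≤ i → y * ((i + 1 : ℕ) : ℝ) ^ (-α) ≤ q i) :
    y ^ α⁻¹ * Gamma (1 - α⁻¹) - (K + 1) ≤ ∑' i, (1 - exp (-q i)) := by
  obtain ⟨hmodel, hclose⟩ := abs_tsum_one_sub_exp_neg_mul_rpow_neg_sub_le hα hy
  have := tsum_le_add_tsum_of_le hmodel hsum (fun i => one_sub_exp_neg_le_one _)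
    (fun i => one_sub_exp_neg_nonneg (hq i)) fun i hi => by gcongr; exact hqK i hi
  linarith [(abs_sub_le_iff.1 hclose).2]

end OneSubExpNeg

lemma eventually_mul_rpow_neg_le_and_le {p : ℕ → ℝ} {α c a b : ℝ}
    (h : Tendsto (fun i : ℕ => p i * (i : ℝ) ^ α) atTop (𝓝 c)) (ha : a < c) (hb : c < b) :
    ∀ᶠ i : ℕ in atTop, a * (i : ℝ) ^ (-α) ≤ p i ∧ p i ≤ b * (i : ℝ) ^ (-α) := by
  filter_upwards [h.eventually (Ioo_mem_nhds ha hb), eventually_gt_atTop 0] with i hi hi0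
  have hpos : (0 : ℝ) < (i : ℝ) ^ α := rpow_pos_of_pos (Nat.cast_pos.2 hi0) α
  have hp : p i = p i * (i : ℝ) ^ α * (i : ℝ) ^ (-α) := by
    rw [rpow_neg (Nat.cast_nonneg _), mul_assoc, mul_inv_cancel₀ hpos.ne', mul_one]
  have hnonneg : (0 : ℝ) ≤ (i : ℝ) ^ (-α) := rpow_nonneg (Nat.cast_nonneg _) _
  rw [hp]
  exact ⟨by gcongr; exact hi.1.le, by gcongr; exact hi.2.le⟩

lemma tendsto_div_nhds_one_of_forall_bounds {ι : Type*} {l : Filter ι} {S D : ι → ℝ}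
    (hD : Tendsto D l atTop)
    (h : ∀ δ ∈ Ioo (0 : ℝ) 1, ∃ C, ∀ᶠ x in l, (1 - δ) * D x - C ≤ S x ∧ S x ≤ (1 + δ) * D x + C) :
    Tendsto (fun x => S x / D x) l (𝓝 1) := by
  rw [Metric.tendsto_nhds]
  intro ε hε
  set δ := min (ε / 2) (1 / 2)
  obtain ⟨C, hC⟩ := h δ ⟨by positivity, (min_le_right _ _).trans_lt (by norm_num)⟩
  have hCD : Tendsto (fun x => C / D x) l (𝓝 0) := tendsto_const_nhds.div_atTop hD
  filter_upwards [hC, hD.eventually_gt_atTop 0, Metric.tendsto_nhds.1 hCD (ε / 2) (by positivity)]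
    with x ⟨hlow, hupp⟩ hDx hCx
  rw [Real.dist_eq, sub_zero, abs_lt] at hCx
  have hle : S x / D x ≤ 1 + δ + C / D x := by
    rw [div_le_iff₀ hDx, add_mul, div_mul_cancel₀ _ hDx.ne']
    linarith
  have hge : 1 - δ - C / D x ≤ S x / D x := by
    rw [le_div_iff₀ hDx, sub_mul, div_mul_cancel₀ _ hDx.ne']
    linarith
  rw [Real.dist_eq, abs_sub_lt_iff]
  constructor <;> linarith [min_le_left (ε / 2) (1 / 2)]

/-- If `p i ~ c / i^α` (`c > 0`, `α > 1`), with `p i > 0`, then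
`∑_{i=1}^∞ (1 - e^{-p_i x}) ~ (c x)^{1/α} Γ(1 - 1/α)` as `x → ∞`. -/
theorem stmt0 (c α : ℝ) (hc : 0 < c) (hα : 1 < α) (p : ℕ → ℝ)
    (hp : ∀ i, 1 ≤ i → 0 < p i)
    (hasymp : Tendsto (fun i : ℕ => p i * (i : ℝ) ^ α) atTop (nhds c)) :
    Tendsto (fun x : ℝ =>
        (∑' i : ℕ, (1 - Real.exp (-(p (i + 1)) * x))) /
          ((c * x) ^ (1 / α) * Real.Gamma (1 - 1 / α)))
      atTop (nhds 1) := by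
  have hα0 : 0 < α := by linarith
  simp only [one_div, neg_mul]
  have hD : Tendsto (fun x => (c * x) ^ α⁻¹ * Gamma (1 - α⁻¹)) atTop atTop :=
    ((tendsto_rpow_atTop (inv_pos.2 hα0)).comp (tendsto_id.const_mul_atTop hc)).atTop_mul_const
      (Gamma_pos_of_pos (sub_pos.2 (inv_lt_one_of_one_lt₀ hα)))
  refine tendsto_div_nhds_one_of_forall_bounds hD fun δ ⟨hδ0, hδ1⟩ => ?_
  obtain ⟨K, hK⟩ := eventually_atTop.1 <| (tendsto_add_atTop_nat 1).eventually <|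
    eventually_mul_rpow_neg_le_and_le hasymp (a := (1 - δ) ^ α * c) (b := (1 + δ) ^ α * c)
      (mul_lt_of_lt_one_left hc (rpow_lt_one (by linarith) (by linarith) hα0))
      (lt_mul_left hc (one_lt_rpow (by linarith) hα0))
  refine ⟨K + 1, ?_⟩
  filter_upwards [eventually_gt_atTop 0] with x hx
  have hq : ∀ i, 0 ≤ p (i + 1) * x := fun i => mul_nonneg (hp _ (by omega)).le hx.le
  have hscale : ∀ s : ℝ, 0 < s → (s ^ α * c * x) ^ α⁻¹ * Gamma (1 - α⁻¹) =
      s * ((c * x) ^ α⁻¹ * Gamma (1 - α⁻¹)) := fun s hs => by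
    rw [mul_assoc, mul_rpow (by positivity) (by positivity), rpow_rpow_inv hs.le hα0.ne', mul_assoc]
  obtain ⟨hsum, hupp⟩ := summable_one_sub_exp_neg_and_tsum_le hα (y := (1 + δ) ^ α * c * x)
    (by positivity) hq fun i hi => by
      linarith [mul_le_mul_of_nonneg_right (hK i hi).2 hx.le]
  have hlow := sub_le_tsum_one_sub_exp_neg hα (y := (1 - δ) ^ α * c * x)
    (mul_pos (mul_pos (rpow_pos_of_pos (by linarith) _) hc) hx) hq hsum fun i hi => by
      linarith [mul_le_mul_of_nonneg_right (hK i hi).1 hx.le]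
  rw [hscale (1 + δ) (by linarith)] at hupp
  rw [hscale (1 - δ) (by linarith)] at hlow
  exact ⟨hlow, hupp⟩
end

section
/- Fix α > 1, c > 0, μ ∈ (0,1]. Let (X_i)_{i≥1} be i.i.d. Bernoulli(μ), q_i = c·i^{-α}, Z_i = q_i X_i, and Y_n = Σ_{i=n}^∞ Z_i. Then there exist n₀ ∈ ℕ and c₀ > 0 such that for all n > n₀, P[ for all k ≥ n, |Y_k − E[Y_k]| < k^{-(α − 2/3)} ] > 1 − c₀/n². -/
/-!
Each summand `q i X i` takes values in `[0, q i]`, so by Hoeffding's lemma its centred version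
is sub-Gaussian with parameter `q i ^ 2 / 4`. Independence and Fatou's lemma carry this over to
the centred tail sum `Y k - E[Y k]`, with parameter `∑_{i ≥ k} q i ^ 2 / 4 = O(k^{1-2α})`. The
Chernoff bound at level `k^{-(α-2/3)}` then gives
`P[|Y k - E[Y k]| ≥ k^{-(α-2/3)}] ≤ 2 exp(-k^{1/3}/A) = O(k^{-3})` for a constant `A > 0`,
and a union bound over `k ≥ n` gives `O(n^{-2})`.
-/

open MeasureTheory ProbabilityTheory Real
open Filter Topology
open scoped ENNReal NNReal

lemma summable_nat_add_rpow_neg {p : ℝ} (hp : 1 < p) (k : ℕ) :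
    Summable fun j : ℕ => ((k + j : ℕ) : ℝ) ^ (-p) := by
  simpa [add_comm k] using
    (summable_nat_add_iff k).2 (Real.summable_nat_rpow.2 (by linarith : -p < -1))

lemma tsum_nat_add_rpow_neg_le {p : ℝ} (hp : 1 < p) {k : ℕ} (hk : 1 ≤ k) :
    ∑' j : ℕ, ((k + j : ℕ) : ℝ) ^ (-p) ≤ p / (p - 1) * (k : ℝ) ^ (1 - p) := by
  have hk0 : (0 : ℝ) < k := by exact_mod_cast hk
  have hanti : AntitoneOn (fun x : ℝ => x ^ (-p)) (Set.Ici (k : ℝ)) := fun x hx y _ hxy =>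
    Real.rpow_le_rpow_of_nonpos (hk0.trans_le hx) hxy (by linarith)
  have htail := hanti.tsum_comp_add_le_integral k
    (integrableOn_Ioi_rpow_of_lt (by linarith) hk0)
    (fun t ht => (Real.rpow_pos_of_pos (hk0.trans ht) _).le)
  rw [integral_Ioi_rpow_of_lt (by linarith) hk0, show -p + 1 = -(p - 1) by ring,
    neg_div_neg_eq, show -(p - 1) = 1 - p by ring] at htail
  have hhead : (k : ℝ) ^ (-p) ≤ (k : ℝ) ^ (1 - p) :=
    Real.rpow_le_rpow_of_exponent_le (by exact_mod_cast hk) (by linarith)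
  rw [(summable_nat_add_rpow_neg hp k).tsum_eq_zero_add]
  simp only [add_zero, show ∀ j, k + (j + 1) = j + k + 1 from fun j => by omega]
  have hp1 : p - 1 ≠ 0 := by linarith
  calc _ ≤ (k : ℝ) ^ (1 - p) + (k : ℝ) ^ (1 - p) / (p - 1) := add_le_add hhead htail
    _ = p / (p - 1) * (k : ℝ) ^ (1 - p) := by field_simp; ring

lemma exp_neg_rpow_div_le {x A : ℝ} (r : ℝ) (hx : 0 < x) (hA : 0 < A) (n : ℕ) :
    exp (-(x ^ r / A)) ≤ n.factorial * A ^ n * x ^ (-(r * n)) := by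
  have h := Real.pow_div_factorial_le_exp _ (by positivity : 0 ≤ x ^ r / A) n
  rw [div_pow, ← Real.rpow_mul_natCast hx.le, div_div, div_le_iff₀ (by positivity)] at h
  rw [exp_neg, Real.rpow_neg hx.le, inv_le_iff_one_le_mul₀' (exp_pos _)]
  have hxr : 0 < x ^ (r * n) := by positivity
  calc (1 : ℝ) = x ^ (r * n) * (x ^ (r * n))⁻¹ := (mul_inv_cancel₀ hxr.ne').symm
    _ ≤ exp (x ^ r / A) * (A ^ n * n.factorial) * (x ^ (r * n))⁻¹ := by gcongr
    _ = _ := by ring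

lemma NNReal.summable_sq {f : ℕ → ℝ≥0} (hf : Summable f) : Summable fun i => f i ^ 2 :=
  NNReal.summable_of_le (fun i => by rw [sq]; exact mul_le_mul_left (hf.le_tsum' i) _)
    (hf.mul_left (∑' i, f i))

lemma integrable_and_integral_le_of_tendsto {Ω : Type*} [MeasurableSpace Ω] {μ : Measure Ω}
    {F : ℕ → Ω → ℝ} {f : Ω → ℝ} {B : ℝ}
    (hF : ∀ n, Integrable (F n) μ) (hF0 : ∀ n ω, 0 ≤ F n ω)
    (hlim : ∀ᵐ ω ∂μ, Tendsto (fun n => F n ω) atTop (𝓝 (f ω)))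
    (hB : ∀ n, ∫ ω, F n ω ∂μ ≤ B) :
    Integrable f μ ∧ ∫ ω, f ω ∂μ ≤ B := by
  have hmeas : AEStronglyMeasurable f μ :=
    aestronglyMeasurable_of_tendsto_ae atTop (fun n => (hF n).1) hlim
  have hf0 : 0 ≤ᵐ[μ] f := hlim.mono fun ω h => ge_of_tendsto' h fun n => hF0 n ω
  have hB0 : 0 ≤ B := (integral_nonneg (hF0 0)).trans (hB 0)
  have hlint : ∫⁻ ω, ENNReal.ofReal (f ω) ∂μ ≤ ENNReal.ofReal B :=
    calc ∫⁻ ω, ENNReal.ofReal (f ω) ∂μ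
        = ∫⁻ ω, liminf (fun n => ENNReal.ofReal (F n ω)) atTop ∂μ :=
          lintegral_congr_ae (hlim.mono fun ω h =>
            ((ENNReal.continuous_ofReal.tendsto _).comp h).liminf_eq.symm)
      _ ≤ liminf (fun n => ∫⁻ ω, ENNReal.ofReal (F n ω) ∂μ) atTop :=
          lintegral_liminf_le' fun n => (hF n).1.aemeasurable.ennreal_ofReal
      _ ≤ ENNReal.ofReal B := liminf_le_of_frequently_le' (Frequently.of_forall fun n => by
          rw [← ofReal_integral_eq_lintegral_ofReal (hF n) (ae_of_all _ (hF0 n))]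
          exact ENNReal.ofReal_le_ofReal (hB n))
  have hfin := (hasFiniteIntegral_iff_ofReal hf0).2 (hlint.trans_lt ENNReal.ofReal_lt_top)
  refine ⟨⟨hmeas, hfin⟩, ?_⟩
  rw [integral_eq_lintegral_of_nonneg_ae hf0 hmeas]
  exact ENNReal.toReal_le_of_le_ofReal hB0 hlint

namespace ProbabilityTheory.HasSubgaussianMGF

variable {Ω : Type*} [MeasurableSpace Ω] {μ : Measure Ω}

lemma mono {X : Ω → ℝ} {c c' : ℝ≥0} (h : HasSubgaussianMGF X c μ) (hc : c ≤ c') :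
    HasSubgaussianMGF X c' μ where
  integrable_exp_mul := h.integrable_exp_mul
  mgf_le t := (h.mgf_le t).trans (exp_le_exp.2 (by gcongr))

lemma of_tendsto {X : ℕ → Ω → ℝ} {Y : Ω → ℝ} {c : ℝ≥0}
    (h : ∀ n, HasSubgaussianMGF (X n) c μ)
    (hlim : ∀ᵐ ω ∂μ, Tendsto (fun n => X n ω) atTop (𝓝 (Y ω))) :
    HasSubgaussianMGF Y c μ := by
  have key (t : ℝ) := integrable_and_integral_le_of_tendsto
    (fun n => (h n).integrable_exp_mul t) (fun n ω => (exp_pos _).le)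
    (hlim.mono fun ω hω => (continuous_exp.tendsto _).comp (hω.const_mul t))
    (fun n => (h n).mgf_le t)
  exact ⟨fun t => (key t).1, fun t => (key t).2⟩

lemma tsum_of_iIndepFun {X : ℕ → Ω → ℝ} (hindep : iIndepFun X μ) {c : ℕ → ℝ≥0}
    (h : ∀ i, HasSubgaussianMGF (X i) (c i) μ) (hc : Summable c)
    (hX : ∀ ω, Summable (X · ω)) :
    HasSubgaussianMGF (fun ω => ∑' i, X i ω) (∑' i, c i) μ :=
  of_tendsto
    (fun _ => (sum_of_iIndepFun hindep fun i _ => h i).mono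
      (hc.sum_le_tsum _ fun _ _ => zero_le))
    (ae_of_all _ fun ω => (hX ω).hasSum.tendsto_sum_nat)

lemma measure_le_abs_le [IsFiniteMeasure μ] {X : Ω → ℝ} {c : ℝ≥0}
    (h : HasSubgaussianMGF X c μ) {ε : ℝ} (hε : 0 ≤ ε) :
    μ {ω | ε ≤ |X ω|} ≤ ENNReal.ofReal (2 * exp (-ε ^ 2 / (2 * c))) := by
  have hsub : {ω | ε ≤ |X ω|} ⊆ {ω | ε ≤ X ω} ∪ {ω | ε ≤ (-X) ω} := fun ω hω =>
    by simpa [le_abs] using hω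
  calc μ {ω | ε ≤ |X ω|} ≤ μ {ω | ε ≤ X ω} + μ {ω | ε ≤ (-X) ω} :=
        (measure_mono hsub).trans (measure_union_le _ _)
    _ = ENNReal.ofReal (μ.real {ω | ε ≤ X ω} + μ.real {ω | ε ≤ (-X) ω}) := by
        rw [ENNReal.ofReal_add measureReal_nonneg measureReal_nonneg, ofReal_measureReal,
          ofReal_measureReal]
    _ ≤ ENNReal.ofReal (2 * exp (-ε ^ 2 / (2 * c))) := ENNReal.ofReal_le_ofReal <| by
        linarith [h.measure_ge_le hε, h.neg.measure_ge_le hε]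

end ProbabilityTheory.HasSubgaussianMGF

theorem hasSubgaussianMGF_tsum_sub_integral_of_mem_Icc {Ω : Type*} [MeasurableSpace Ω]
    {μ : Measure Ω} [IsProbabilityMeasure μ] {Z : ℕ → Ω → ℝ} {b : ℕ → ℝ}
    (hZ : ∀ i, Measurable (Z i)) (hindep : iIndepFun Z μ)
    (hbd : ∀ i ω, Z i ω ∈ Set.Icc 0 (b i)) (hb : Summable b) :
    HasSubgaussianMGF (fun ω => ∑' i, Z i ω - ∫ ω', ∑' i, Z i ω' ∂μ)
      (∑' i, (‖b i‖₊ / 2) ^ 2) μ := by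
  have hint i : Integrable (Z i) μ :=
    .of_mem_Icc 0 (b i) (hZ i).aemeasurable (ae_of_all _ (hbd i))
  have hmean i : ∫ ω, Z i ω ∂μ ∈ Set.Icc 0 (b i) :=
    ⟨integral_nonneg fun ω => (hbd i ω).1,
      (integral_mono (hint i) (integrable_const _) fun ω => (hbd i ω).2).trans_eq (by simp)⟩
  have hsumZ ω : Summable (Z · ω) :=
    .of_nonneg_of_le (fun i => (hbd i ω).1) (fun i => (hbd i ω).2) hb
  have hsum_mean : Summable fun i => ∫ ω, Z i ω ∂μ :=
    .of_nonneg_of_le (fun i => (hmean i).1) (fun i => (hmean i).2) hb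
  have hcentered i : HasSubgaussianMGF (fun ω => Z i ω - ∫ ω', Z i ω' ∂μ)
      ((‖b i‖₊ / 2) ^ 2) μ := by
    simpa using hasSubgaussianMGF_of_mem_Icc (hZ i).aemeasurable (ae_of_all _ (hbd i))
  have hsq : Summable fun i => (‖b i‖₊ / 2) ^ 2 :=
    NNReal.summable_sq ((NNReal.summable_coe.1 (by simpa using hb.norm)).div_const 2)
  refine (HasSubgaussianMGF.tsum_of_iIndepFun
    (hindep.comp _ fun i => measurable_id.sub_const _) hcentered hsq
    fun ω => (hsumZ ω).sub hsum_mean).congr (ae_of_all _ fun ω => ?_)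
  simp only [Function.comp_apply, id_eq]
  rw [Summable.tsum_sub (hsumZ ω) hsum_mean, integral_tsum_of_summable_integral_norm hint
    (by simpa [abs_of_nonneg (hbd _ _).1] using hsum_mean)]

lemma measure_iUnion_nat_add_le {Ω : Type*} [MeasurableSpace Ω] {μ : Measure Ω}
    {s : ℕ → Set Ω} {D p : ℝ} (hp : 1 < p) (hD : 0 ≤ D) {n : ℕ} (hn : 1 ≤ n)
    (hs : ∀ k, n ≤ k → μ (s k) ≤ ENNReal.ofReal (D * (k : ℝ) ^ (-p))) :
    μ (⋃ j, s (n + j)) ≤ ENNReal.ofReal (D * (p / (p - 1) * (n : ℝ) ^ (1 - p))) :=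
  calc μ (⋃ j, s (n + j)) ≤ ∑' j, μ (s (n + j)) := measure_iUnion_le _
    _ ≤ ∑' j : ℕ, ENNReal.ofReal (D * ((n + j : ℕ) : ℝ) ^ (-p)) :=
        ENNReal.tsum_le_tsum fun j => hs _ (Nat.le_add_right n j)
    _ = ENNReal.ofReal (∑' j : ℕ, D * ((n + j : ℕ) : ℝ) ^ (-p)) :=
        (ENNReal.ofReal_tsum_of_nonneg (fun j => by positivity)
          ((summable_nat_add_rpow_neg hp n).mul_left D)).symm
    _ ≤ ENNReal.ofReal (D * (p / (p - 1) * (n : ℝ) ^ (1 - p))) := by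
        rw [tsum_mul_left]
        exact ENNReal.ofReal_le_ofReal
          (mul_le_mul_of_nonneg_left (tsum_nat_add_rpow_neg_le hp hn) hD)

lemma one_sub_ofReal_lt_measure_of_compl_subset {Ω : Type*} [MeasurableSpace Ω]
    {μ : Measure Ω} [IsProbabilityMeasure μ] {s t : Set Ω} (hst : sᶜ ⊆ t) {x : ℝ}
    (hx0 : 0 < x) (hx1 : x < 1) (ht : μ t ≤ ENNReal.ofReal x) :
    1 - ENNReal.ofReal (2 * x) < μ s := by
  have hcover : 1 ≤ μ s + μ t :=
    (measure_univ.symm.trans_le (measure_univ_le_add_compl s)).trans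
      (add_le_add le_rfl (measure_mono hst))
  refine lt_of_lt_of_le ?_ (tsub_le_iff_right.2 (hcover.trans (add_le_add le_rfl ht)))
  have hx : ENNReal.ofReal x < ENNReal.ofReal (2 * x) :=
    (ENNReal.ofReal_lt_ofReal_iff (by positivity)).2 (by linarith)
  rcases le_or_gt (ENNReal.ofReal (2 * x)) 1 with hle | hgt
  · exact ((ENNReal.cancel_of_ne ENNReal.one_ne_top).tsub_lt_tsub_iff_left_of_le
      (ENNReal.cancel_of_ne (hle.trans_lt ENNReal.one_lt_top).ne) hle).2 hx
  · rw [tsub_eq_zero_of_le hgt.le]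
    exact tsub_pos_of_lt (ENNReal.ofReal_lt_one.2 hx1)

lemma tsum_sq_zipf_le {c α : ℝ} (hα : 1 < α) {k : ℕ} (hk : 1 ≤ k) :
    ∑' i : ℕ, (c * ((k + i : ℕ) : ℝ) ^ (-α)) ^ 2
      ≤ c ^ 2 * (2 * α / (2 * α - 1) * (k : ℝ) ^ (1 - 2 * α)) := by
  have hsq (i : ℕ) : (c * ((k + i : ℕ) : ℝ) ^ (-α)) ^ 2
      = c ^ 2 * ((k + i : ℕ) : ℝ) ^ (-(2 * α)) := by
    rw [mul_pow, ← Real.rpow_mul_natCast (Nat.cast_nonneg _)]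
    congr 2
    push_cast
    ring
  rw [tsum_congr hsq, tsum_mul_left]
  exact mul_le_mul_of_nonneg_left (tsum_nat_add_rpow_neg_le (by linarith) hk) (sq_nonneg c)

lemma exp_neg_sq_div_le_rpow {α A k : ℝ} (hA : 0 < A) (hk : 0 < k) :
    exp (-((k ^ (-(α - 2 / 3))) ^ 2) / (2 * (A / 2 * k ^ (1 - 2 * α))))
      ≤ Nat.factorial 9 * A ^ 9 * k ^ (-3 : ℝ) := by
  have hsq : (k ^ (-(α - 2 / 3))) ^ 2 = k ^ (1 / 3 : ℝ) * k ^ (1 - 2 * α) := by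
    rw [← Real.rpow_natCast, ← Real.rpow_mul hk.le, ← Real.rpow_add hk]
    congr 1
    push_cast
    ring
  have hexp : (k ^ (-(α - 2 / 3))) ^ 2 / (2 * (A / 2 * k ^ (1 - 2 * α)))
      = k ^ (1 / 3 : ℝ) / A := by
    rw [hsq]
    field_simp
  rw [neg_div, hexp]
  convert exp_neg_rpow_div_le (1 / 3) hk hA 9 using 3
  norm_num

theorem exists_measure_tail_deviation_le_rpow {Ω : Type*} [MeasureSpace Ω]
    [IsProbabilityMeasure (ℙ : Measure Ω)] {c α : ℝ} (hc : 0 < c) (hα : 1 < α)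
    {X : ℕ → Ω → ℝ} (hmeas : ∀ i, Measurable (X i))
    (hX : ∀ i ω, X i ω ∈ Set.Icc 0 1) (hindep : iIndepFun X ℙ)
    {q : ℕ → ℝ} (hq : ∀ i : ℕ, 1 ≤ i → q i = c * (i : ℝ) ^ (-α))
    {Y : ℕ → Ω → ℝ} (hY : ∀ n ω, Y n ω = ∑' i : ℕ, q (n + i) * X (n + i) ω) :
    ∃ D : ℝ, 0 < D ∧ ∀ k : ℕ, 1 ≤ k →
      (ℙ : Measure Ω)
          {ω | (k : ℝ) ^ (-(α - 2 / 3)) ≤ |Y k ω - ∫ ω', Y k ω' ∂(ℙ : Measure Ω)|}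
        ≤ ENNReal.ofReal (D * (k : ℝ) ^ (-3 : ℝ)) := by
  have h2α : 0 < 2 * α - 1 := by linarith
  set A := c ^ 2 * (2 * α / (2 * α - 1)) / 2 with hA
  have hA0 : 0 < A := by positivity
  refine ⟨2 * (Nat.factorial 9 * A ^ 9), by positivity, fun k hk => ?_⟩
  have hk0 : (0 : ℝ) < k := by exact_mod_cast hk
  have hqk (i : ℕ) : q (k + i) = c * ((k + i : ℕ) : ℝ) ^ (-α) := hq _ (by omega)
  have hsub : HasSubgaussianMGF (fun ω => Y k ω - ∫ ω', Y k ω' ∂(ℙ : Measure Ω))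
      (∑' i, (‖q (k + i)‖₊ / 2) ^ 2) ℙ := by
    rw [funext (hY k)]
    refine hasSubgaussianMGF_tsum_sub_integral_of_mem_Icc
      (fun i => (hmeas _).const_mul _)
      ((hindep.precomp (add_right_injective k)).comp _ fun i => measurable_id.const_mul _)
      (fun i ω => ?_) ?_
    · have hq0 : 0 ≤ q (k + i) := by rw [hqk]; positivity
      exact ⟨mul_nonneg hq0 (hX _ ω).1, mul_le_of_le_one_right hq0 (hX _ ω).2⟩
    · rw [funext hqk]
      exact (summable_nat_add_rpow_neg hα k).mul_left c
  have hvar :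
      ∑' i, (‖q (k + i)‖₊ / 2) ^ 2 ≤ (A / 2 * (k : ℝ) ^ (1 - 2 * α)).toNNReal := by
    rw [Real.le_toNNReal_iff_coe_le (by positivity), NNReal.coe_tsum]
    push_cast
    simp only [Real.norm_eq_abs, div_pow, sq_abs, hqk]
    rw [tsum_div_const]
    have := tsum_sq_zipf_le (c := c) hα hk
    rw [hA]
    linarith
  refine ((hsub.mono hvar).measure_le_abs_le (by positivity)).trans
    (ENNReal.ofReal_le_ofReal ?_)
  rw [Real.coe_toNNReal _ (by positivity), mul_assoc]
  gcongr
  exact exp_neg_sq_div_le_rpow hA0 hk0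

theorem stmt6_general {Ω : Type*} [MeasureSpace Ω] [IsProbabilityMeasure (ℙ : Measure Ω)]
    (c α : ℝ) (hc : 0 < c) (hα : 1 < α)
    (X : ℕ → Ω → ℝ) (hmeas : ∀ i, Measurable (X i))
    (h01 : ∀ i ω, X i ω = 0 ∨ X i ω = 1)
    (hindep : iIndepFun X ℙ)
    (q : ℕ → ℝ) (hq : ∀ i : ℕ, 1 ≤ i → q i = c * (i : ℝ) ^ (-α))
    (Y : ℕ → Ω → ℝ) (hY : ∀ n ω, Y n ω = ∑' i : ℕ, q (n + i) * X (n + i) ω) :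
    ∃ (n₀ : ℕ) (c₀ : ℝ), 0 < c₀ ∧ ∀ n : ℕ, n₀ < n →
      1 - ENNReal.ofReal (c₀ / (n : ℝ) ^ 2) <
        (ℙ : Measure Ω)
          {ω | ∀ k : ℕ, n ≤ k →
            |Y k ω - ∫ ω', Y k ω' ∂(ℙ : Measure Ω)| < (k : ℝ) ^ (-(α - 2 / 3))} := by
  obtain ⟨D, hD, hdev⟩ := exists_measure_tail_deviation_le_rpow hc hα hmeas
    (fun i ω => by rcases h01 i ω with h | h <;> simp [h]) hindep hq hY
  refine ⟨⌈3 * D⌉₊, 3 * D, by positivity, fun n hn => ?_⟩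
  have hn1 : 1 ≤ n := by omega
  have hnD : 3 * D < n := (Nat.le_ceil _).trans_lt (by exact_mod_cast hn)
  have hbad := measure_iUnion_nat_add_le (by norm_num : (1 : ℝ) < 3) hD.le hn1
    fun k hk => hdev k (hn1.trans hk)
  rw [show D * (3 / (3 - 1) * (n : ℝ) ^ (1 - 3 : ℝ)) = 3 / 2 * D / (n : ℝ) ^ 2 by
    rw [show (1 - 3 : ℝ) = -(2 : ℕ) by norm_num, Real.rpow_neg (Nat.cast_nonneg n),
      Real.rpow_natCast]
    field_simp
    norm_num] at hbad
  rw [show 3 * D / (n : ℝ) ^ 2 = 2 * (3 / 2 * D / (n : ℝ) ^ 2) by ring]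
  refine one_sub_ofReal_lt_measure_of_compl_subset (fun ω hω => ?_) (by positivity) ?_ hbad
  · simp only [Set.mem_compl_iff, Set.mem_ofPred_eq, not_forall, not_lt] at hω
    obtain ⟨k, hk, hdevk⟩ := hω
    exact Set.mem_iUnion.2 ⟨k - n, by rwa [Nat.add_sub_cancel' hk]⟩
  · have hn2 := le_self_pow₀ (show (1 : ℝ) ≤ n by exact_mod_cast hn1) two_ne_zero
    rw [div_lt_one (by positivity)]
    linarith

/-- Uniform tail concentration for randomly thinned Zipf tail sums: with
`Y n = ∑_{i=n}^∞ q i · X i`, `q i = c i^{-α}`, `X i` i.i.d. Bernoulli(μ),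
there are `n₀, c₀ > 0` with
`P[∀ k ≥ n, |Y k − E Y k| < k^{-(α-2/3)}] > 1 − c₀/n²` for all `n > n₀`. -/
theorem stmt6 {Ω : Type*} [MeasureSpace Ω] [IsProbabilityMeasure (ℙ : Measure Ω)]
    (c α μm : ℝ) (hc : 0 < c) (hα : 1 < α) (hμ0 : 0 < μm) (hμ1 : μm ≤ 1)
    (X : ℕ → Ω → ℝ) (hmeas : ∀ i, Measurable (X i))
    (h01 : ∀ i ω, X i ω = 0 ∨ X i ω = 1)
    (hindep : iIndepFun X ℙ)
    (hdist : ∀ i, (ℙ : Measure Ω) {ω | X i ω = 1} = ENNReal.ofReal μm)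
    (q : ℕ → ℝ) (hq : ∀ i : ℕ, 1 ≤ i → q i = c * (i : ℝ) ^ (-α))
    (Y : ℕ → Ω → ℝ) (hY : ∀ n ω, Y n ω = ∑' i : ℕ, q (n + i) * X (n + i) ω) :
    ∃ (n₀ : ℕ) (c₀ : ℝ), 0 < c₀ ∧ ∀ n : ℕ, n₀ < n →
      1 - ENNReal.ofReal (c₀ / (n : ℝ) ^ 2) <
        (ℙ : Measure Ω)
          {ω | ∀ k : ℕ, n ≤ k →
            |Y k ω - ∫ ω', Y k ω' ∂(ℙ : Measure Ω)| < (k : ℝ) ^ (-(α - 2 / 3))} :=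
  stmt6_general c α hc hα X hmeas h01 hindep q hq Y hY
end

section
/- Fix α > 1 and c > 0 and let q_i = c i^{-α}. For each x > 0 there exists a unique t = t_C(x) > 0 solving Σ_{i=1}^∞ (1 - e^{-q_i t}) = x, and t_C(x) ~ x^α / (c Γ(1 - 1/α)^α) as x → ∞. -/
/-!
Put `S(λ) = ∑_{n ≥ 1} (1 - exp (-λ n^{-α}))`, so that the equation reads `S(c t) = x`.
The summand is antitone in `n` and bounded by `1`, so `S(λ)` lies within `1` of
`∫_0^∞ (1 - exp (-λ x^{-α})) dx`, which the layer-cake formula (with tail sets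
`{x | λ x^{-α} > s} = (0, (λ/s)^{1/α})`) evaluates to `λ^{1/α} Γ(1 - 1/α)`.
As `S` is continuous and strictly increasing with `S 0 = 0`, and unbounded by the lower bound,
`S(λ) = x` has exactly one root; and `S(λ) ~ λ^{1/α} Γ(1 - 1/α)` inverts to `c t_C(x) ~ (x / Γ(1 - 1/α))^α`.
-/

open Filter Real MeasureTheory Set Topology

section IntegralTest

variable {f : ℝ → ℝ} {M : ℝ}

/- Mathlib's integral test wants antitonicity on `[0, ∞)`; redefining `f 0` as an upper bound
provides it without changing the integral over `(0, ∞)` or the values at `1, 2, …`. -/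
lemma AntitoneOn.update_zero (hf : AntitoneOn f (Ioi 0)) (hM : ∀ x ∈ Ioi 0, f x ≤ M) :
    AntitoneOn (Function.update f 0 M) (Ici 0) := by
  intro x hx y hy hxy
  rcases (mem_Ici.1 hx).eq_or_lt with rfl | hx0
  · rcases (mem_Ici.1 hy).eq_or_lt with rfl | hy0
    · rfl
    · simpa [hy0.ne'] using hM y hy0
  · have hy0 : 0 < y := hx0.trans_le hxy
    simpa [hx0.ne', hy0.ne'] using hf hx0 hy0 hxy

lemma AntitoneOn.tsum_add_one_le_integral_Ioi (hf : AntitoneOn f (Ioi 0))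
    (hM : ∀ x ∈ Ioi 0, f x ≤ M) (hint : IntegrableOn f (Ioi 0))
    (hnonneg : ∀ x ∈ Ioi 0, 0 ≤ f x) :
    ∑' n : ℕ, f (n + 1 : ℕ) ≤ ∫ x in Ioi 0, f x := by
  have hg : EqOn (Function.update f 0 M) f (Ioi 0) := fun x hx =>
    Function.update_of_ne (ne_of_gt hx) M f
  have := (hf.update_zero hM).tsum_add_one_le_integral
    (hint.congr_fun hg.symm measurableSet_Ioi) (fun x hx => hg hx ▸ hnonneg x hx)
  rwa [setIntegral_congr_fun measurableSet_Ioi hg,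
    tsum_congr fun n => hg (mem_Ioi.2 (by positivity))] at this

lemma AntitoneOn.integral_Ioi_le_add_tsum_add_one (hf : AntitoneOn f (Ioi 0))
    (hM : ∀ x ∈ Ioi 0, f x ≤ M) (hint : IntegrableOn f (Ioi 0))
    (hnonneg : ∀ x ∈ Ioi 0, 0 ≤ f x) :
    ∫ x in Ioi 0, f x ≤ M + ∑' n : ℕ, f (n + 1 : ℕ) := by
  have hg : EqOn (Function.update f 0 M) f (Ioi 0) := fun x hx =>
    Function.update_of_ne (ne_of_gt hx) M f
  have hanti := hf.update_zero hM
  have hint' := hint.congr_fun hg.symm measurableSet_Ioi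
  have hnonneg' : ∀ x ∈ Ioi (0 : ℝ), 0 ≤ Function.update f 0 M x := fun x hx =>
    hg hx ▸ hnonneg x hx
  have hsum := hanti.summable_of_integrableOn_Ioi_zero hint' hnonneg'
  have := hanti.integral_le_tsum hsum hnonneg'
  rwa [setIntegral_congr_fun measurableSet_Ioi hg, hsum.tsum_eq_zero_add,
    tsum_congr fun n => hg (mem_Ioi.2 (by positivity)), Nat.cast_zero,
    Function.update_self] at this

end IntegralTest

lemma tendsto_div_of_sub_le_of_le {f g : ℝ → ℝ} {C : ℝ} (hg : Tendsto g atTop atTop)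
    (hlow : ∀ᶠ l in atTop, g l - C ≤ f l) (hup : ∀ᶠ l in atTop, f l ≤ g l) :
    Tendsto (fun l => f l / g l) atTop (𝓝 1) := by
  have hlim : Tendsto (fun l => 1 - C / g l) atTop (𝓝 1) := by
    simpa using tendsto_const_nhds.sub (hg.const_div_atTop C)
  refine tendsto_of_tendsto_of_tendsto_of_le_of_le' hlim tendsto_const_nhds ?_ ?_
  · filter_upwards [hlow, hg.eventually_gt_atTop 0] with l hl hgl
    rw [one_sub_div hgl.ne']
    gcongr
  · filter_upwards [hup, hg.eventually_gt_atTop 0] with l hl hgl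
    exact (div_le_one hgl).2 hl

lemma tendsto_div_rpow_of_comp_eq {S L : ℝ → ℝ} {β K : ℝ} (hβ : 0 < β) (hK : 0 < K)
    (hS : Tendsto (fun l => S l / (l ^ β * K)) atTop (𝓝 1)) (hL : Tendsto L atTop atTop)
    (hSL : ∀ᶠ x in atTop, S (L x) = x) :
    Tendsto (fun x => L x / (x / K) ^ β⁻¹) atTop (𝓝 1) := by
  have h0 : Tendsto (fun x => x / (L x ^ β * K)) atTop (𝓝 1) :=
    (hS.comp hL).congr' (hSL.mono fun x hx => by rw [Function.comp_apply, hx])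
  have h1 : Tendsto (fun x => (x / (L x ^ β * K))⁻¹) atTop (𝓝 1) := by
    simpa using h0.inv₀ one_ne_zero
  have h2 := (continuousAt_rpow_const 1 β⁻¹ (Or.inl one_ne_zero)).tendsto.comp h1
  rw [one_rpow] at h2
  refine h2.congr' ?_
  filter_upwards [hL.eventually_gt_atTop 0, eventually_gt_atTop 0] with x hLx hx
  rw [Function.comp_apply, inv_div, div_rpow (by positivity) hx.le,
    mul_rpow (by positivity) hK.le, rpow_rpow_inv hLx.le hβ.ne', div_rpow hx.le hK.le]
  field_simp

lemma Gamma_one_sub_inv_pos {α : ℝ} (hα : 1 < α) : 0 < Gamma (1 - α⁻¹) :=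
  Gamma_pos_of_pos (sub_pos.2 (inv_lt_one_of_one_lt₀ hα))

noncomputable def cheSummand (α l x : ℝ) : ℝ := 1 - exp (-(l * x ^ (-α)))

noncomputable def cheSum (α l : ℝ) : ℝ := ∑' n : ℕ, cheSummand α l (n + 1 : ℕ)

section Summand

variable {α l x : ℝ}

lemma cheSummand_nonneg (hl : 0 ≤ l) (hx : 0 ≤ x) : 0 ≤ cheSummand α l x := by
  have : 0 ≤ l * x ^ (-α) := by positivity
  simpa [cheSummand] using this

lemma cheSummand_le_one : cheSummand α l x ≤ 1 := by
  simpa [cheSummand] using (exp_pos _).le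

lemma cheSummand_le : cheSummand α l x ≤ l * x ^ (-α) := by
  have := add_one_le_exp (-(l * x ^ (-α)))
  rw [cheSummand]
  linarith

lemma antitoneOn_cheSummand (hα : 0 < α) (hl : 0 ≤ l) :
    AntitoneOn (cheSummand α l) (Ioi 0) := by
  intro x hx y hy hxy
  have : y ^ (-α) ≤ x ^ (-α) := (rpow_le_rpow_iff_of_neg hy hx (neg_neg_of_pos hα)).2 hxy
  unfold cheSummand
  gcongr

lemma cheSummand_lt_cheSummand {l' : ℝ} (hx : 0 < x) (hll' : l < l') :
    cheSummand α l x < cheSummand α l' x := by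
  have : 0 < x ^ (-α) := rpow_pos_of_pos hx _
  unfold cheSummand
  gcongr

lemma cheSummand_eq_integral : cheSummand α l x = ∫ t in 0..l * x ^ (-α), exp (-t) := by
  rw [intervalIntegral.integral_comp_neg (fun t => exp t), integral_exp, neg_zero, exp_zero,
    cheSummand]

lemma Ioi_inter_setOf_lt_mul_rpow_neg (hα : 0 < α) (hl : 0 ≤ l) {t : ℝ} (ht : 0 < t) :
    {x | t < l * x ^ (-α)} ∩ Ioi 0 = Ioo 0 ((l / t) ^ α⁻¹) := by
  ext x
  simp only [mem_inter_iff, mem_ofPred_eq, mem_Ioi, mem_Ioo]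
  refine and_comm.trans (and_congr_right fun hx => ?_)
  rw [lt_rpow_inv_iff_of_pos hx.le (by positivity) hα, rpow_neg hx.le, lt_div_iff₀ ht,
    ← div_eq_mul_inv, lt_div_iff₀ (rpow_pos_of_pos hx α), mul_comm]

lemma lintegral_cheSummand (hα : 1 < α) (hl : 0 < l) :
    ∫⁻ x in Ioi 0, ENNReal.ofReal (cheSummand α l x) =
      ENNReal.ofReal (l ^ α⁻¹ * Gamma (1 - α⁻¹)) := by
  have hs : 0 < 1 - α⁻¹ := sub_pos.2 (inv_lt_one_of_one_lt₀ hα)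
  simp_rw [cheSummand_eq_integral]
  rw [lintegral_comp_eq_lintegral_meas_lt_mul (f := fun x => l * x ^ (-α))
      (g := fun t => exp (-t)) _
      (ae_restrict_of_forall_mem measurableSet_Ioi fun x (hx : 0 < x) => by positivity)
      (by fun_prop)
      (fun t _ => (by fun_prop : Continuous fun t => exp (-t)).intervalIntegrable _ _)
      (Eventually.of_forall fun t => (exp_pos _).le),
    Gamma_eq_integral hs, ← integral_const_mul, ofReal_integral_eq_lintegral_ofReal]
  · refine setLIntegral_congr_fun measurableSet_Ioi fun t (ht : 0 < t) => ?_
    rw [Measure.restrict_apply' measurableSet_Ioi,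
      Ioi_inter_setOf_lt_mul_rpow_neg (by linarith) hl.le ht, volume_Ioo, sub_zero,
      ← ENNReal.ofReal_mul (by positivity), div_rpow hl.le ht.le,
      show 1 - α⁻¹ - 1 = -α⁻¹ by ring, rpow_neg ht.le]
    ring_nf
  · exact (GammaIntegral_convergent hs).const_mul _
  · exact ae_restrict_of_forall_mem measurableSet_Ioi fun t (ht : 0 < t) => by positivity

lemma integrableOn_cheSummand (hα : 1 < α) (hl : 0 < l) :
    IntegrableOn (cheSummand α l) (Ioi 0) := by
  refine ⟨by unfold cheSummand; fun_prop, ?_⟩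
  rw [hasFiniteIntegral_iff_ofReal
      (ae_restrict_of_forall_mem measurableSet_Ioi fun x hx => cheSummand_nonneg hl.le hx.le),
    lintegral_cheSummand hα hl]
  exact ENNReal.ofReal_lt_top

lemma integral_cheSummand (hα : 1 < α) (hl : 0 < l) :
    ∫ x in Ioi 0, cheSummand α l x = l ^ α⁻¹ * Gamma (1 - α⁻¹) := by
  rw [integral_eq_lintegral_of_nonneg_ae
      (ae_restrict_of_forall_mem measurableSet_Ioi fun x hx => cheSummand_nonneg hl.le hx.le)
      (integrableOn_cheSummand hα hl).aestronglyMeasurable,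
    lintegral_cheSummand hα hl,
    ENNReal.toReal_ofReal (mul_pos (by positivity) (Gamma_one_sub_inv_pos hα)).le]

end Summand

section Sum

variable {α l x : ℝ}

lemma summable_rpow_neg_add_one (hα : 1 < α) :
    Summable fun n : ℕ => ((n + 1 : ℕ) : ℝ) ^ (-α) :=
  (summable_nat_add_iff 1).2 (summable_nat_rpow.2 (by linarith))

lemma summable_cheSummand (hα : 1 < α) (hl : 0 ≤ l) :
    Summable fun n : ℕ => cheSummand α l (n + 1 : ℕ) :=
  ((summable_rpow_neg_add_one hα).mul_left l).of_nonneg_of_le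
    (fun _ => cheSummand_nonneg hl (Nat.cast_nonneg _)) fun _ => cheSummand_le

lemma cheSum_zero : cheSum α 0 = 0 := by
  simp [cheSum, cheSummand]

lemma strictMonoOn_cheSum (hα : 1 < α) : StrictMonoOn (cheSum α) (Ici 0) :=
  fun _ hl _ hl' hll' => Summable.tsum_lt_tsum (i := 0)
    (fun _ => (cheSummand_lt_cheSummand (by positivity) hll').le)
    (cheSummand_lt_cheSummand (by positivity) hll')
    (summable_cheSummand hα hl) (summable_cheSummand hα hl')

lemma continuousOn_cheSum (hα : 1 < α) (R : ℝ) : ContinuousOn (cheSum α) (Icc 0 R) := by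
  refine continuousOn_tsum (fun n => by unfold cheSummand; fun_prop)
    ((summable_rpow_neg_add_one hα).mul_left R) fun n l hl => ?_
  rw [norm_of_nonneg (cheSummand_nonneg hl.1 (Nat.cast_nonneg _))]
  exact cheSummand_le.trans (by gcongr; exact hl.2)

lemma cheSum_le (hα : 1 < α) (hl : 0 < l) : cheSum α l ≤ l ^ α⁻¹ * Gamma (1 - α⁻¹) :=
  integral_cheSummand hα hl ▸
    (antitoneOn_cheSummand (by linarith) hl.le).tsum_add_one_le_integral_Ioi
      (fun _ _ => cheSummand_le_one) (integrableOn_cheSummand hα hl)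
      fun _ hx => cheSummand_nonneg hl.le (le_of_lt hx)

lemma le_one_add_cheSum (hα : 1 < α) (hl : 0 < l) :
    l ^ α⁻¹ * Gamma (1 - α⁻¹) ≤ 1 + cheSum α l :=
  integral_cheSummand hα hl ▸
    (antitoneOn_cheSummand (by linarith) hl.le).integral_Ioi_le_add_tsum_add_one
      (fun _ _ => cheSummand_le_one) (integrableOn_cheSummand hα hl)
      fun _ hx => cheSummand_nonneg hl.le (le_of_lt hx)

lemma tendsto_cheSum_div (hα : 1 < α) :
    Tendsto (fun l => cheSum α l / (l ^ α⁻¹ * Gamma (1 - α⁻¹))) atTop (𝓝 1) := by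
  refine tendsto_div_of_sub_le_of_le (C := 1)
    ((tendsto_rpow_atTop (by positivity)).atTop_mul_const (Gamma_one_sub_inv_pos hα)) ?_ ?_
  · filter_upwards [eventually_gt_atTop 0] with l hl
    linarith [le_one_add_cheSum hα hl]
  · filter_upwards [eventually_gt_atTop 0] with l hl using cheSum_le hα hl

lemma existsUnique_cheSum_eq (hα : 1 < α) (hx : 0 < x) : ∃! l, 0 < l ∧ cheSum α l = x := by
  have hΓ := Gamma_one_sub_inv_pos hα
  set R := ((x + 1) / Gamma (1 - α⁻¹)) ^ α
  have hR : 0 < R := by positivity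
  have hxR : x ≤ cheSum α R := by
    have := le_one_add_cheSum hα hR
    rwa [rpow_rpow_inv (by positivity) (by linarith), div_mul_cancel₀ _ hΓ.ne', add_comm,
      add_le_add_iff_left] at this
  obtain ⟨l, hlR, hl⟩ := intermediate_value_Icc hR.le (continuousOn_cheSum hα R)
    ⟨cheSum_zero.symm ▸ hx.le, hxR⟩
  have hl0 : 0 < l := hlR.1.lt_of_ne (by rintro rfl; simp [cheSum_zero, hx.ne] at hl)
  exact ⟨l, ⟨hl0, hl⟩, fun l' ⟨hl'0, hl'⟩ =>
    (strictMonoOn_cheSum hα).injOn hl'0.le hl0.le (hl'.trans hl.symm)⟩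

lemma tendsto_atTop_of_cheSum_comp_eq (hα : 1 < α) {L : ℝ → ℝ}
    (hL : ∀ᶠ x in atTop, 0 < L x ∧ cheSum α (L x) = x) : Tendsto L atTop atTop := by
  have hα0 : 0 < α := by linarith
  have hΓ := Gamma_one_sub_inv_pos hα
  refine tendsto_atTop_mono' atTop ?_
    ((tendsto_rpow_atTop hα0).comp (tendsto_id.atTop_div_const hΓ))
  filter_upwards [hL, eventually_gt_atTop 0] with x ⟨hLx, hSL⟩ hx
  calc (x / Gamma (1 - α⁻¹)) ^ α ≤ (L x ^ α⁻¹) ^ α := by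
        gcongr
        rw [div_le_iff₀ hΓ]
        exact hSL.symm.trans_le (cheSum_le hα hLx)
    _ = L x := rpow_inv_rpow hLx.le hα0.ne'

end Sum

/-- Characteristic time: for `q i = c i^{-α}` (`α > 1`, `c > 0`), for each `x > 0` there is
a unique `t > 0` with `∑_i (1 - e^{-q_i t}) = x`, and any such solution `t_C(x)` satisfies
`t_C(x) ~ x^α / (c Γ(1-1/α)^α)` as `x → ∞`. -/
theorem stmt12 (c α : ℝ) (hc : 0 < c) (hα : 1 < α)
    (q : ℕ → ℝ) (hq : ∀ i : ℕ, 1 ≤ i → q i = c * (i : ℝ) ^ (-α)) :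
    (∀ x : ℝ, 0 < x → ∃! t : ℝ,
        0 < t ∧ (∑' i : ℕ, (1 - Real.exp (-(q (i + 1)) * t))) = x) ∧
    (∀ tC : ℝ → ℝ,
      (∀ x : ℝ, 0 < x →
        0 < tC x ∧ (∑' i : ℕ, (1 - Real.exp (-(q (i + 1)) * tC x))) = x) →
      Tendsto (fun x : ℝ =>
          tC x / (x ^ α / (c * Real.Gamma (1 - 1 / α) ^ α)))
        atTop (nhds 1)) := by
  have hsum : ∀ t, ∑' i : ℕ, (1 - exp (-(q (i + 1)) * t)) = cheSum α (c * t) := fun t =>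
    tsum_congr fun i => by rw [hq (i + 1) (by omega), cheSummand]; ring_nf
  refine ⟨fun x hx => ?_, fun tC htC => ?_⟩
  · obtain ⟨l, ⟨hl0, hl⟩, huniq⟩ := existsUnique_cheSum_eq hα hx
    refine ⟨l / c, ⟨by positivity, by rw [hsum, mul_div_cancel₀ _ hc.ne', hl]⟩, ?_⟩
    rintro t ⟨ht0, ht⟩
    rw [eq_div_iff hc.ne', mul_comm]
    exact huniq _ ⟨by positivity, hsum t ▸ ht⟩
  · have hL : ∀ᶠ x in atTop, 0 < c * tC x ∧ cheSum α (c * tC x) = x := by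
      filter_upwards [eventually_gt_atTop 0] with x hx
      exact ⟨mul_pos hc (htC x hx).1, hsum _ ▸ (htC x hx).2⟩
    have hΓ := Gamma_one_sub_inv_pos hα
    have := tendsto_div_rpow_of_comp_eq (inv_pos.2 (by linarith)) hΓ (tendsto_cheSum_div hα)
      (tendsto_atTop_of_cheSum_comp_eq hα hL) (hL.mono fun x hx => hx.2)
    rw [inv_inv] at this
    refine this.congr' ?_
    filter_upwards [eventually_gt_atTop 0] with x hx
    rw [div_rpow hx.le hΓ.le, one_div]
    field_simp
end

section
/- Fix α > 1, c > 0, δ > 0, and a sequence p_i ~ c/i^α with 0 ≤ p_i < 1. Then lim_{x→∞} [Σ_{i=1}^∞ (1 - e^{-(1+δ) p_i x})] / [Σ_{i=1}^∞ (1 - e^{-p_i x})] = (1+δ)^{1/α}. -/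
/-!
Comparing the series with the integral of the antitone function `t ↦ 1 - exp (-y t^{-α})`, and
rescaling `t = y^{1/α} s`, gives `∑_{i ≥ 1} (1 - exp (-y i^{-α})) = y^{1/α} K + O(1)` with
`K = ∫_0^∞ (1 - exp (-s^{-α})) ds > 0`. Since `p i` is eventually squeezed between `a i^{-α}` and
`b i^{-α}` for any `a < c < b`, the occupancy sum `T x = ∑ (1 - exp (-p_i x))` satisfies
`T x / x^{1/α} → c^{1/α} K`; a function with such power asymptotics has
`T ((1+δ) x) / T x → (1+δ)^{1/α}`.
-/

open Filter Real MeasureTheory Set Topology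

lemma tsum_le_natCast_add_tsum {f g : ℕ → ℝ} {N : ℕ} (hf : Summable f) (hg : Summable g)
    (hf_le_one : ∀ i, f i ≤ 1) (hg_nonneg : ∀ i, 0 ≤ g i)
    (hfg : ∀ i, N ≤ i → f i ≤ g i) :
    ∑' i, f i ≤ N + ∑' i, g i := by
  rw [← hf.sum_add_tsum_nat_add N, ← hg.sum_add_tsum_nat_add N]
  have hhead_f : ∑ i ∈ Finset.range N, f i ≤ N := by
    simpa using Finset.sum_le_sum fun i (_ : i ∈ Finset.range N) => hf_le_one i
  have hhead_g : 0 ≤ ∑ i ∈ Finset.range N, g i := Finset.sum_nonneg fun i _ => hg_nonneg i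
  have htail : ∑' i, f (i + N) ≤ ∑' i, g (i + N) :=
    ((summable_nat_add_iff N).2 hf).tsum_le_tsum (fun i => hfg _ (Nat.le_add_left N i))
      ((summable_nat_add_iff N).2 hg)
  linarith

lemma AntitoneOn.abs_tsum_sub_integral_Ioi_le {f : ℝ → ℝ} (anti : AntitoneOn f (Ioi 0))
    (integrable : IntegrableOn f (Ioi 0)) (nonneg : ∀ t ∈ Ioi 0, 0 ≤ f t)
    (le_one : ∀ t ∈ Ioi 0, f t ≤ 1) :
    |∑' n : ℕ, f (n + 1 : ℕ) - ∫ t in Ioi 0, f t| ≤ 1 := by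
  have hsub : Ici ((1 : ℕ) : ℝ) ⊆ Ioi 0 := fun t ht => by
    simp only [Nat.cast_one, mem_Ici] at ht; exact mem_Ioi.2 (by linarith)
  have anti₁ := anti.mono hsub
  have integrable₁ := integrable.mono_set (Ioi_subset_Ici_self.trans hsub)
  have nonneg₁ : ∀ t ∈ Ioi ((1 : ℕ) : ℝ), 0 ≤ f t := fun t ht =>
    nonneg t (hsub (mem_Ici.2 (le_of_lt ht)))
  have hs := anti₁.summable_of_integrableOn_Ioi integrable₁ nonneg₁
  have upper := anti₁.tsum_comp_add_le_integral 1 integrable₁ nonneg₁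
  have lower := anti₁.integral_le_tsum_comp_add 1 hs nonneg₁
  have hshift : ∑' n : ℕ, f (n + 1 : ℕ) = f 1 + ∑' n : ℕ, f (n + 1 + 1 : ℕ) := by
    simpa using ((summable_nat_add_iff 1).2 hs).tsum_eq_zero_add
  have hsplit : ∫ t in Ioi 0, f t = (∫ t in Ioc 0 1, f t) + ∫ t in Ioi 1, f t := by
    rw [← setIntegral_union (Ioc_disjoint_Ioi le_rfl) measurableSet_Ioi
      (integrable.mono_set Ioc_subset_Ioi_self) (integrable.mono_set (Ioi_subset_Ioi zero_le_one)),
      Ioc_union_Ioi_eq_Ioi zero_le_one]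
  have hhead_nonneg : 0 ≤ ∫ t in Ioc 0 1, f t :=
    setIntegral_nonneg measurableSet_Ioc fun t ht => nonneg t ht.1
  have hhead_le : ∫ t in Ioc 0 1, f t ≤ 1 := by
    have := norm_setIntegral_le_of_norm_le_const (μ := volume) (f := f) (s := Ioc 0 1) (C := 1)
      (by simp)
      fun t ht => by rw [norm_of_nonneg (nonneg t ht.1)]; exact le_one t ht.1
    simpa [norm_of_nonneg hhead_nonneg] using this
  have hf1 := le_one 1 (mem_Ioi.2 one_pos)
  push_cast at upper lower hshift ⊢
  rw [abs_le]; constructor <;> linarith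

lemma eventually_lt_div_rpow {f : ℝ → ℝ} {β M C b : ℝ} (hβ : 0 < β) (hb : b < M)
    (hf : ∀ x, 0 < x → M * x ^ β - C ≤ f x) : ∀ᶠ x in atTop, b < f x / x ^ β := by
  have hlim : Tendsto (fun x : ℝ => M - C / x ^ β) atTop (𝓝 M) := by
    simpa using tendsto_const_nhds.sub (tendsto_const_nhds.div_atTop (tendsto_rpow_atTop hβ))
  filter_upwards [hlim.eventually (lt_mem_nhds hb), eventually_gt_atTop 0] with x hbx hx
  have hxβ : 0 < x ^ β := rpow_pos_of_pos hx β
  calc b < M - C / x ^ β := hbx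
    _ = (M * x ^ β - C) / x ^ β := by field_simp
    _ ≤ f x / x ^ β := div_le_div_of_nonneg_right (hf x hx) hxβ.le

lemma eventually_div_rpow_lt {f : ℝ → ℝ} {β M C b : ℝ} (hβ : 0 < β) (hb : M < b)
    (hf : ∀ x, 0 < x → f x ≤ C + M * x ^ β) : ∀ᶠ x in atTop, f x / x ^ β < b := by
  have := eventually_lt_div_rpow (f := fun x => -f x) (C := C) hβ (neg_lt_neg hb)
    fun x hx => by linarith [hf x hx]
  filter_upwards [this] with x hx
  rw [neg_div] at hx
  linarith

theorem tendsto_comp_mul_div_of_tendsto_div_rpow {f : ℝ → ℝ} {β L k : ℝ} (hk : 0 < k)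
    (hL : L ≠ 0) (hf : Tendsto (fun x => f x / x ^ β) atTop (𝓝 L)) :
    Tendsto (fun x => f (k * x) / f x) atTop (𝓝 (k ^ β)) := by
  have hfk : Tendsto (fun x => f (k * x) / (k * x) ^ β) atTop (𝓝 L) :=
    hf.comp (tendsto_id.const_mul_atTop hk)
  have hratio := (hfk.div hf hL).mul_const (k ^ β)
  rw [div_self hL, one_mul] at hratio
  refine hratio.congr' ?_
  filter_upwards [eventually_gt_atTop 0] with x hx
  have hkβ : 0 < k ^ β := rpow_pos_of_pos hk β
  have hxβ : 0 < x ^ β := rpow_pos_of_pos hx β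
  rw [Pi.div_apply, mul_rpow hk.le hx.le]
  rcases eq_or_ne (f x) 0 with hfx | hfx
  · simp [hfx]
  · field_simp

noncomputable def powerOccupancy (α y t : ℝ) : ℝ := 1 - exp (-(y * t ^ (-α)))

-- This is `Γ(1 - 1/α)`; the argument only needs that it is positive.
noncomputable def powerOccupancyConstant (α : ℝ) : ℝ := ∫ t in Ioi 0, powerOccupancy α 1 t

section powerOccupancy

variable {α y : ℝ}

lemma powerOccupancy_nonneg (hy : 0 ≤ y) {t : ℝ} (ht : 0 ≤ t) : 0 ≤ powerOccupancy α y t :=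
  one_sub_exp_neg_nonneg (mul_nonneg hy (rpow_nonneg ht _))

lemma powerOccupancy_le_one (t : ℝ) : powerOccupancy α y t ≤ 1 :=
  one_sub_exp_neg_le_one _

lemma antitoneOn_powerOccupancy (hα : 0 ≤ α) (hy : 0 ≤ y) :
    AntitoneOn (powerOccupancy α y) (Ioi 0) := fun _ hs _ _ hst => by
  unfold powerOccupancy
  gcongr _ - exp (-(_ * ?_))
  exact rpow_le_rpow_of_nonpos hs hst (neg_nonpos.2 hα)

lemma integrableOn_powerOccupancy (hα : 1 < α) (hy : 0 ≤ y) :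
    IntegrableOn (powerOccupancy α y) (Ioi 0) := by
  have hmeas : Measurable (powerOccupancy α y) := by unfold powerOccupancy; fun_prop
  rw [← Ioc_union_Ioi_eq_Ioi zero_le_one]
  refine IntegrableOn.union ?_ ?_
  · refine Measure.integrableOn_of_bounded (M := 1) (by simp) hmeas.aestronglyMeasurable ?_
    filter_upwards [ae_restrict_mem measurableSet_Ioc] with t ht
    rw [norm_of_nonneg (powerOccupancy_nonneg hy ht.1.le)]
    exact powerOccupancy_le_one t
  · refine ((integrableOn_Ioi_rpow_of_lt (neg_lt_neg hα) one_pos).const_mul y).mono'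
      hmeas.aestronglyMeasurable ?_
    filter_upwards [ae_restrict_mem measurableSet_Ioi] with t ht
    rw [norm_of_nonneg (powerOccupancy_nonneg hy (zero_le_one.trans ht.out.le))]
    exact one_sub_exp_neg_le_self _

lemma integral_powerOccupancy (hα : α ≠ 0) (hy : 0 < y) :
    ∫ t in Ioi 0, powerOccupancy α y t = y ^ (1 / α) * powerOccupancyConstant α := by
  have hb : 0 < y ^ (-(1 / α)) := rpow_pos_of_pos hy _
  have hrescale : ∀ t ∈ Ioi (0 : ℝ),
      powerOccupancy α y t = powerOccupancy α 1 (y ^ (-(1 / α)) * t) := by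
    intro t ht
    rw [powerOccupancy, powerOccupancy, mul_rpow hb.le (le_of_lt ht), ← rpow_mul hy.le,
      show -(1 / α) * -α = 1 by field_simp, rpow_one, one_mul]
  rw [setIntegral_congr_fun measurableSet_Ioi hrescale, integral_comp_mul_left_Ioi _ _ hb,
    mul_zero, smul_eq_mul, rpow_neg hy.le, inv_inv, powerOccupancyConstant]

lemma powerOccupancyConstant_pos (hα : 1 < α) : 0 < powerOccupancyConstant α := by
  have hpos : ∀ t ∈ Ioi (0 : ℝ), 0 < powerOccupancy α 1 t := fun t ht => by
    rw [powerOccupancy, one_mul, sub_pos, exp_lt_one_iff, neg_lt_zero]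
    exact rpow_pos_of_pos ht _
  rw [powerOccupancyConstant, setIntegral_pos_iff_support_of_nonneg_ae
    ((ae_restrict_mem measurableSet_Ioi).mono fun t ht => (hpos t ht).le)
    (integrableOn_powerOccupancy hα zero_le_one),
    inter_eq_right.2 fun t ht => Function.mem_support.2 (hpos t ht).ne', volume_Ioi]
  exact ENNReal.zero_lt_top

lemma powerOccupancy_mul (a x t : ℝ) :
    powerOccupancy α (a * x) t = 1 - exp (-(a * t ^ (-α)) * x) := by
  rw [powerOccupancy]; ring_nf

lemma summable_powerOccupancy (hα : 1 < α) (hy : 0 ≤ y) :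
    Summable fun n : ℕ => powerOccupancy α y (n + 1 : ℕ) :=
  .of_nonneg_of_le (fun n => powerOccupancy_nonneg hy n.succ.cast_nonneg)
    (fun _ => one_sub_exp_neg_le_self _)
    (((summable_nat_add_iff 1).2 (summable_nat_rpow.2 (neg_lt_neg hα))).mul_left y)

lemma abs_tsum_powerOccupancy_sub_le (hα : 1 < α) (hy : 0 < y) :
    |∑' n : ℕ, powerOccupancy α y (n + 1 : ℕ) - y ^ (1 / α) * powerOccupancyConstant α| ≤ 1 := by
  rw [← integral_powerOccupancy (by linarith) hy]
  exact (antitoneOn_powerOccupancy (by linarith) hy.le).abs_tsum_sub_integral_Ioi_le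
    (integrableOn_powerOccupancy hα hy.le) (fun t ht => powerOccupancy_nonneg hy.le (le_of_lt ht))
    fun t _ => powerOccupancy_le_one t

end powerOccupancy

lemma mul_rpow_mul_rpow_neg_eq (q : ℝ) {t : ℝ} (ht : 0 < t) (α : ℝ) :
    q * t ^ α * t ^ (-α) = q := by
  rw [mul_assoc, ← rpow_add ht, add_neg_cancel, rpow_zero, mul_one]

noncomputable def occupancySum (p : ℕ → ℝ) (x : ℝ) : ℝ :=
  ∑' i : ℕ, (1 - exp (-(p (i + 1)) * x))

section asymptotics

variable {p : ℕ → ℝ} {c α : ℝ}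

lemma eventually_le_mul_rpow_neg
    (hasymp : Tendsto (fun i : ℕ => p i * (i : ℝ) ^ α) atTop (𝓝 c))
    {a : ℝ} (hca : c < a) : ∀ᶠ i : ℕ in atTop, p i ≤ a * (i : ℝ) ^ (-α) := by
  filter_upwards [hasymp.eventually (gt_mem_nhds hca), eventually_gt_atTop 0] with i hi hi0
  have hi0' : (0 : ℝ) < i := Nat.cast_pos.2 hi0
  rw [← mul_rpow_mul_rpow_neg_eq (p i) hi0' α]
  exact mul_le_mul_of_nonneg_right hi.le (rpow_nonneg hi0'.le _)

lemma eventually_mul_rpow_neg_le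
    (hasymp : Tendsto (fun i : ℕ => p i * (i : ℝ) ^ α) atTop (𝓝 c))
    {a : ℝ} (hac : a < c) : ∀ᶠ i : ℕ in atTop, a * (i : ℝ) ^ (-α) ≤ p i := by
  filter_upwards [hasymp.eventually (lt_mem_nhds hac), eventually_gt_atTop 0] with i hi hi0
  have hi0' : (0 : ℝ) < i := Nat.cast_pos.2 hi0
  rw [← mul_rpow_mul_rpow_neg_eq (p i) hi0' α]
  exact mul_le_mul_of_nonneg_right hi.le (rpow_nonneg hi0'.le _)

lemma summable_of_tendsto_mul_rpow (hα : 1 < α) (hp : ∀ i, 0 ≤ p i)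
    (hasymp : Tendsto (fun i : ℕ => p i * (i : ℝ) ^ α) atTop (𝓝 c)) : Summable p :=
  .of_norm_bounded_eventually_nat ((summable_nat_rpow.2 (neg_lt_neg hα)).mul_left (c + 1)) <| by
    filter_upwards [eventually_le_mul_rpow_neg hasymp (lt_add_one c)] with i hi
    rwa [norm_of_nonneg (hp i)]

lemma summable_occupancy (hp : ∀ i, 0 ≤ p i) (hs : Summable p) {x : ℝ} (hx : 0 ≤ x) :
    Summable fun i : ℕ => 1 - exp (-(p (i + 1)) * x) :=
  .of_nonneg_of_le
    (fun i => by rw [neg_mul]; exact one_sub_exp_neg_nonneg (mul_nonneg (hp _) hx))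
    (fun i => by rw [neg_mul]; exact one_sub_exp_neg_le_self _)
    (((summable_nat_add_iff 1).2 hs).mul_right x)

lemma occupancySum_le (hp : ∀ i, 0 ≤ p i) (hs : Summable p) (hα : 1 < α) {a : ℝ} (ha : 0 < a)
    (h : ∀ᶠ i : ℕ in atTop, p i ≤ a * (i : ℝ) ^ (-α)) :
    ∃ C, ∀ x, 0 < x →
      occupancySum p x ≤ C + a ^ (1 / α) * powerOccupancyConstant α * x ^ (1 / α) := by
  obtain ⟨N, hN⟩ := eventually_atTop.1 h
  refine ⟨N + 1, fun x hx => ?_⟩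
  have hax : 0 < a * x := mul_pos ha hx
  have hcmp := tsum_le_natCast_add_tsum (N := N) (summable_occupancy hp hs hx.le)
    (summable_powerOccupancy hα hax.le) (fun i => by rw [neg_mul]; exact one_sub_exp_neg_le_one _)
    (fun i => powerOccupancy_nonneg hax.le i.succ.cast_nonneg)
    fun i hi => by
      rw [powerOccupancy_mul]
      gcongr
      exact hN _ (by omega)
  have hsum := (abs_le.1 (abs_tsum_powerOccupancy_sub_le hα hax)).2
  rw [mul_rpow ha.le hx.le] at hsum
  rw [occupancySum]
  linarith

lemma le_occupancySum (hp : ∀ i, 0 ≤ p i) (hs : Summable p) (hα : 1 < α) {a : ℝ} (ha : 0 < a)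
    (h : ∀ᶠ i : ℕ in atTop, a * (i : ℝ) ^ (-α) ≤ p i) :
    ∃ C, ∀ x, 0 < x →
      a ^ (1 / α) * powerOccupancyConstant α * x ^ (1 / α) - C ≤ occupancySum p x := by
  obtain ⟨N, hN⟩ := eventually_atTop.1 h
  refine ⟨N + 1, fun x hx => ?_⟩
  have hax : 0 < a * x := mul_pos ha hx
  have hcmp := tsum_le_natCast_add_tsum (N := N) (summable_powerOccupancy hα hax.le)
    (summable_occupancy hp hs hx.le) (fun i => powerOccupancy_le_one _)
    (fun i => by rw [neg_mul]; exact one_sub_exp_neg_nonneg (mul_nonneg (hp _) hx.le))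
    fun i hi => by
      rw [powerOccupancy_mul]
      gcongr
      exact hN _ (by omega)
  have hsum := (abs_le.1 (abs_tsum_powerOccupancy_sub_le hα hax)).1
  rw [mul_rpow ha.le hx.le] at hsum
  rw [occupancySum]
  linarith

theorem tendsto_occupancySum_div_rpow (hc : 0 < c) (hα : 1 < α) (hp : ∀ i, 0 ≤ p i)
    (hasymp : Tendsto (fun i : ℕ => p i * (i : ℝ) ^ α) atTop (𝓝 c)) :
    Tendsto (fun x => occupancySum p x / x ^ (1 / α)) atTop
      (𝓝 (c ^ (1 / α) * powerOccupancyConstant α)) := by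
  have hs := summable_of_tendsto_mul_rpow hα hp hasymp
  have hβ : 0 < 1 / α := by positivity
  have hF : ContinuousAt (fun a : ℝ => a ^ (1 / α) * powerOccupancyConstant α) c :=
    (continuousAt_id.rpow_const (Or.inl hc.ne')).mul continuousAt_const
  refine tendsto_order.2 ⟨fun b hb => ?_, fun b hb => ?_⟩
  · obtain ⟨a, ⟨hba, ha⟩, hac⟩ := (((hF.eventually (lt_mem_nhds hb)).and
      (lt_mem_nhds hc)).filter_mono nhdsWithin_le_nhds |>.and
      (self_mem_nhdsWithin (s := Iio c))).exists
    obtain ⟨C, hC⟩ := le_occupancySum hp hs hα ha (eventually_mul_rpow_neg_le hasymp hac)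
    exact eventually_lt_div_rpow hβ hba hC
  · obtain ⟨a, hab, hca⟩ := ((hF.eventually (gt_mem_nhds hb)).filter_mono
      nhdsWithin_le_nhds |>.and (self_mem_nhdsWithin (s := Ioi c))).exists
    obtain ⟨C, hC⟩ :=
      occupancySum_le hp hs hα (hc.trans hca) (eventually_le_mul_rpow_neg hasymp hca)
    exact eventually_div_rpow_lt hβ hab hC

end asymptotics

/-- Scaling property: for `p i ~ c/i^α` with `0 ≤ p i < 1`,
`∑_i (1 - e^{-(1+δ) p_i x}) / ∑_i (1 - e^{-p_i x}) → (1+δ)^{1/α}` as `x → ∞`. -/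
theorem stmt15 (c α δ : ℝ) (hc : 0 < c) (hα : 1 < α) (hδ : 0 < δ)
    (p : ℕ → ℝ) (hp : ∀ i, 0 ≤ p i ∧ p i < 1)
    (hasymp : Tendsto (fun i : ℕ => p i * (i : ℝ) ^ α) atTop (nhds c)) :
    Tendsto (fun x : ℝ =>
        (∑' i : ℕ, (1 - Real.exp (-(1 + δ) * p (i + 1) * x))) /
          (∑' i : ℕ, (1 - Real.exp (-(p (i + 1)) * x))))
      atTop (nhds ((1 + δ) ^ (1 / α))) := by
  have hL : c ^ (1 / α) * powerOccupancyConstant α ≠ 0 :=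
    (mul_pos (rpow_pos_of_pos hc _) (powerOccupancyConstant_pos hα)).ne'
  refine (tendsto_comp_mul_div_of_tendsto_div_rpow (by linarith) hL
    (tendsto_occupancySum_div_rpow hc hα (fun i => (hp i).1) hasymp)).congr fun x => ?_
  simp only [occupancySum]
  congr 2 with i
  ring_nf
end
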